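/- arXiv:1112.4297 — 9 statements merged into one kernel-verified Lean document; each statement's English description precedes it below -/
import Mathlib

section
/- For every η ∈ [0, π] one has Δ(η) ≥ 1 > 0, and both Λ = Λᵃ(η) and Λ = Λᵒ(η) are roots of the quadratic equation (3 − cos η)·Λ² − 2·(52 + 8·cos η)·Λ + 240·(1 − cos η) = 0. -/
open Real

noncomputable def Delta (η : ℝ) : ℝ :=
  1 + 268 * Real.cos (η / 2) ^ 2 - 44 * Real.cos (η / 2) ^ 4

noncomputable def Lama (η : ℝ) : ℝ :=
  120 * Real.sin (η / 2) ^ 2 / (11 + 4 * Real.cos (η / 2) ^ 2 + Real.sqrt (Delta η))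

noncomputable def Lamo (η : ℝ) : ℝ :=
  (22 + 8 * Real.cos (η / 2) ^ 2 + 2 * Real.sqrt (Delta η)) / (1 + Real.sin (η / 2) ^ 2)

theorem stmt_0 :
    ∀ η ∈ Set.Icc (0 : ℝ) Real.pi,
      1 ≤ Delta η ∧ 0 < Delta η ∧
      ((3 - Real.cos η) * (Lama η) ^ 2 - 2 * (52 + 8 * Real.cos η) * (Lama η)
          + 240 * (1 - Real.cos η) = 0) ∧
      ((3 - Real.cos η) * (Lamo η) ^ 2 - 2 * (52 + 8 * Real.cos η) * (Lamo η)
          + 240 * (1 - Real.cos η) = 0) := by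
  intro η _
  set c := Real.cos (η / 2) with hc
  set s := Real.sin (η / 2) with hs
  have h1 : s ^ 2 + c ^ 2 = 1 := Real.sin_sq_add_cos_sq _
  have hs2 : s ^ 2 = 1 - c ^ 2 := by linarith
  have hcos : Real.cos η = 2 * c ^ 2 - 1 := by
    have h := Real.cos_two_mul (η / 2)
    rw [show 2 * (η / 2) = η by ring] at h
    linarith
  have hc2 : c ^ 2 ≤ 1 := by nlinarith [sq_nonneg s]
  have hΔ1 : 1 ≤ Delta η := by
    unfold Delta
    rw [← hc]
    nlinarith [sq_nonneg c, sq_nonneg (c ^ 2)]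
  have hΔ0 : 0 < Delta η := by linarith
  set r := Real.sqrt (Delta η) with hrdef
  have hr : r ^ 2 = 1 + 268 * c ^ 2 - 44 * c ^ 4 := by
    rw [hrdef, Real.sq_sqrt hΔ0.le]
    unfold Delta
    rw [← hc]
  have hr0 : 0 ≤ r := Real.sqrt_nonneg _
  have hd1 : (11 : ℝ) + 4 * c ^ 2 + r ≠ 0 := by positivity
  have hd2 : (2 : ℝ) - c ^ 2 ≠ 0 := by nlinarith
  refine ⟨hΔ1, hΔ0, ?_, ?_⟩
  · set L := Lama η with hLdef
    have hL : (11 + 4 * c ^ 2 + r) * L = 120 * (1 - c ^ 2) := by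
      rw [hLdef]
      unfold Lama
      rw [← hc, ← hs, ← hrdef, hs2]
      field_simp
    rw [hcos]
    have key : (11 + 4 * c ^ 2 + r) ^ 2 *
        ((3 - (2 * c ^ 2 - 1)) * L ^ 2 - 2 * (52 + 8 * (2 * c ^ 2 - 1)) * L
          + 240 * (1 - (2 * c ^ 2 - 1))) = 0 := by
      linear_combination
        ((4 - 2 * c ^ 2) * ((11 + 4 * c ^ 2 + r) * L + 120 * (1 - c ^ 2))
          - (88 + 32 * c ^ 2) * (11 + 4 * c ^ 2 + r)) * hL
        + (480 - 480 * c ^ 2) * hr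
    have h2 := mul_eq_zero.mp key
    rcases h2 with h2 | h2
    · exact absurd h2 (pow_ne_zero 2 hd1)
    · exact h2
  · set L := Lamo η with hLdef
    have hL : (2 - c ^ 2) * L = 22 + 8 * c ^ 2 + 2 * r := by
      rw [hLdef]
      unfold Lamo
      rw [← hc, ← hs, ← hrdef, hs2]
      have : (1 : ℝ) + (1 - c ^ 2) = 2 - c ^ 2 := by ring
      rw [this]
      field_simp
    rw [hcos]
    have key : (2 - c ^ 2) ^ 2 *
        ((3 - (2 * c ^ 2 - 1)) * L ^ 2 - 2 * (52 + 8 * (2 * c ^ 2 - 1)) * L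
          + 240 * (1 - (2 * c ^ 2 - 1))) = 0 := by
      linear_combination
        ((4 - 2 * c ^ 2) * ((2 - c ^ 2) * L + (22 + 8 * c ^ 2 + 2 * r))
          - (88 + 32 * c ^ 2) * (2 - c ^ 2)) * hL
        + (16 - 8 * c ^ 2) * hr
    have h2 := mul_eq_zero.mp key
    rcases h2 with h2 | h2
    · exact absurd h2 (pow_ne_zero 2 hd2)
    · exact h2
end

section
/- There exists a constant C > 0 such that |√(Λᵃ(η)) − η| ≤ C·η⁵ for every η ∈ [0, π]; in other words, the acoustic dispersion relation λᵃ(η) = √(Λᵃ(η)) approximates the continuous dispersion relation η with error of order η⁵. -/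
/-!
Writing `s = sin (η/2)`, `c = cos (η/2)`, the symbol `Λᵃ(η)` is a root of
`P(X) = (1 + s²) X² - (44 + 16 c²) X + 240 s²`. Expanding `cos η` to fourth order shows
`|P(η²)| ≤ η⁶` for `η ≤ 1`, while
`P(η²) - P(Λᵃ) = (η² - Λᵃ) ((1 + s²)(η² + Λᵃ) - 44 - 16 c²)`
with the second factor at most `-4` there; hence `|η² - Λᵃ| ≤ η⁶ / 4` and
`|√Λᵃ - η| ≤ |Λᵃ - η²| / η ≤ η⁵ / 4`.
For `1 < η ≤ π` both `√Λᵃ` and `η` lie in `[0, 4]`.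
-/

open Real

open Complex Finset in
theorem Complex.cos_bound_six {x : ℂ} (hx : ‖x‖ ≤ 1) :
    ‖cos x - (1 - x ^ 2 / 2 + x ^ 4 / 24)‖ ≤ ‖x‖ ^ 6 * (7 / 4320) :=
  calc
    ‖cos x - (1 - x ^ 2 / 2 + x ^ 4 / 24)‖ =
        ‖(exp (-x * I) - ∑ m ∈ range 6, (-x * I) ^ m / m.factorial) / 2 +
         (exp (x * I) - ∑ m ∈ range 6, (x * I) ^ m / m.factorial) / 2‖ := by
      simp [cos, field, Finset.sum_range_succ, Nat.factorial]
      grind [I_sq, two_ne_zero]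
    _ ≤ ‖exp (-x * I) - ∑ m ∈ range 6, (-x * I) ^ m / m.factorial‖ / 2 +
        ‖exp (x * I) - ∑ m ∈ range 6, (x * I) ^ m / m.factorial‖ / 2 := by
      grw [norm_add_le]
      simp
    _ ≤ ‖-x * I‖ ^ 6 * (Nat.succ 6 * (Nat.factorial 6 * (6 : ℕ) : ℝ)⁻¹) / 2 +
        ‖x * I‖ ^ 6 * (Nat.succ 6 * (Nat.factorial 6 * (6 : ℕ) : ℝ)⁻¹) / 2 := by
      grw [exp_bound (by simpa) (by simp), exp_bound (by simpa) (by simp)]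
    _ = ‖x‖ ^ 6 * (7 / 4320) := by norm_num [Nat.factorial]

open Complex in
theorem Real.cos_bound_six {x : ℝ} (hx : |x| ≤ 1) :
    |Real.cos x - (1 - x ^ 2 / 2 + x ^ 4 / 24)| ≤ |x| ^ 6 * (7 / 4320) := by
  simpa [← ofReal_cos, ← norm_eq_abs, ← norm_real] using
    Complex.cos_bound_six (x := x) (by simpa)

/-- Λᵃ and Λᵒ are the two roots of this polynomial in `X`. -/
noncomputable def acousticPoly (η X : ℝ) : ℝ :=
  (1 + sin (η / 2) ^ 2) * X ^ 2 - (44 + 16 * cos (η / 2) ^ 2) * X + 240 * sin (η / 2) ^ 2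

lemma acousticPoly_sub (η X Y : ℝ) :
    acousticPoly η X - acousticPoly η Y
      = (X - Y) * ((1 + sin (η / 2) ^ 2) * (X + Y) - (44 + 16 * cos (η / 2) ^ 2)) := by
  unfold acousticPoly; ring

lemma one_le_Delta (η : ℝ) : 1 ≤ Delta η := by
  have := cos_sq_le_one (η / 2)
  unfold Delta; nlinarith [sq_nonneg (cos (η / 2))]

lemma Lama_mul_denom (η : ℝ) :
    Lama η * (11 + 4 * cos (η / 2) ^ 2 + √(Delta η)) = 120 * sin (η / 2) ^ 2 := by
  have : 0 < 11 + 4 * cos (η / 2) ^ 2 + √(Delta η) := by positivity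
  unfold Lama; field_simp

lemma Lama_nonneg (η : ℝ) : 0 ≤ Lama η := by
  unfold Lama; positivity

lemma Lama_le_ten (η : ℝ) : Lama η ≤ 10 := by
  have h := Lama_mul_denom η
  have ht : 1 ≤ √(Delta η) := Real.one_le_sqrt.mpr (one_le_Delta η)
  nlinarith [sin_sq_le_one (η / 2), sq_nonneg (cos (η / 2)), Lama_nonneg η]

lemma acousticPoly_Lama (η : ℝ) : acousticPoly η (Lama η) = 0 := by
  set s := sin (η / 2)
  set c := cos (η / 2)
  set t := √(Delta η)
  have hsc : s ^ 2 + c ^ 2 = 1 := sin_sq_add_cos_sq _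
  have ht : t ^ 2 = 1 + 268 * c ^ 2 - 44 * c ^ 4 :=
    Real.sq_sqrt (zero_le_one.trans (one_le_Delta η))
  have hL := Lama_mul_denom η
  have hD : 0 < 11 + 4 * c ^ 2 + t := by positivity
  have : acousticPoly η (Lama η) * (11 + 4 * c ^ 2 + t) ^ 2 = 0 := by
    unfold acousticPoly
    linear_combination ((1 + s ^ 2) * (Lama η * (11 + 4 * c ^ 2 + t) + 120 * s ^ 2)
        - (44 + 16 * c ^ 2) * (11 + 4 * c ^ 2 + t)) * hL
      + 240 * s ^ 2 * ht + 14400 * s ^ 2 * (s ^ 2 - c ^ 2 + 2) * hsc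
  simpa [hD.ne'] using this

lemma abs_acousticPoly_sq_le {η : ℝ} (h0 : 0 ≤ η) (h1 : η ≤ 1) :
    |acousticPoly η (η ^ 2)| ≤ η ^ 6 := by
  set e := cos η - (1 - η ^ 2 / 2 + η ^ 4 / 24)
  have he : |e| ≤ η ^ 6 * (7 / 4320) := by
    simpa [abs_of_nonneg h0] using Real.cos_bound_six (x := η) (by rwa [abs_of_nonneg h0])
  have hP : acousticPoly η (η ^ 2)
      = -η ^ 6 / 12 - η ^ 8 / 48 - (240 + 16 * η ^ 2 + η ^ 4) / 2 * e := by
    have hc : cos (η / 2) ^ 2 = 1 / 2 + cos η / 2 := by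
      rw [cos_sq, mul_div_cancel₀ _ two_ne_zero]
    unfold acousticPoly; rw [sin_sq, hc]; ring
  have h2 : η ^ 2 ≤ 1 := pow_le_one₀ h0 h1
  have h4 : η ^ 4 ≤ 1 := pow_le_one₀ h0 h1
  have h8 : η ^ 8 ≤ η ^ 6 := pow_le_pow_of_le_one h0 h1 (by norm_num)
  rw [hP]
  rw [abs_le] at he ⊢
  constructor <;> nlinarith [pow_nonneg h0 6, pow_nonneg h0 4]

lemma abs_sq_sub_Lama_le {η : ℝ} (h0 : 0 ≤ η) (h1 : η ≤ 1) :
    |η ^ 2 - Lama η| ≤ η ^ 6 / 4 := by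
  set B := (1 + sin (η / 2) ^ 2) * (η ^ 2 + Lama η) - (44 + 16 * cos (η / 2) ^ 2)
  have hB : B ≤ -4 := by
    nlinarith [pow_le_one₀ (n := 2) h0 h1, sin_sq_le_one (η / 2), sq_nonneg (sin (η / 2)),
      sq_nonneg (cos (η / 2)), Lama_nonneg η, Lama_le_ten η]
  have hP : acousticPoly η (η ^ 2) = (η ^ 2 - Lama η) * B := by
    rw [← acousticPoly_sub, acousticPoly_Lama, sub_zero]
  calc |η ^ 2 - Lama η| = |η ^ 2 - Lama η| * 4 / 4 := by ring
    _ ≤ |η ^ 2 - Lama η| * |B| / 4 := by gcongr; rw [abs_of_neg (by linarith)]; linarith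
    _ = |acousticPoly η (η ^ 2)| / 4 := by rw [hP, abs_mul]
    _ ≤ η ^ 6 / 4 := by gcongr; exact abs_acousticPoly_sq_le h0 h1

lemma abs_sqrt_sub_le_div {a b : ℝ} (ha : 0 ≤ a) (hb : 0 < b) :
    |√a - b| ≤ |a - b ^ 2| / b := by
  rw [le_div_iff₀ hb]
  calc |√a - b| * b ≤ |√a - b| * (√a + b) := by gcongr; linarith [Real.sqrt_nonneg a]
    _ = |(√a - b) * (√a + b)| := by rw [abs_mul, abs_of_pos (by positivity : 0 < √a + b)]
    _ = |a - b ^ 2| := by congr 1; linear_combination Real.sq_sqrt ha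

theorem stmt_1 :
    ∃ C > (0 : ℝ), ∀ η ∈ Set.Icc (0 : ℝ) Real.pi,
      |Real.sqrt (Lama η) - η| ≤ C * η ^ 5 := by
  refine ⟨4, by norm_num, ?_⟩
  rintro η ⟨h0, hπ⟩
  rcases h0.eq_or_lt with rfl | hpos
  · simp [Lama]
  rcases le_or_gt η 1 with h1 | h1
  · calc |√(Lama η) - η| ≤ |Lama η - η ^ 2| / η :=
          abs_sqrt_sub_le_div (Lama_nonneg η) hpos
      _ ≤ η ^ 6 / 4 / η := by rw [abs_sub_comm]; gcongr; exact abs_sq_sub_Lama_le h0 h1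
      _ ≤ 4 * η ^ 5 := by
        rw [div_le_iff₀ hpos]; nlinarith [pow_nonneg h0 6]
  · have hsqrt : √(Lama η) ≤ 4 :=
      Real.sqrt_le_iff.mpr ⟨by norm_num, by linarith [Lama_le_ten η]⟩
    have hη : η ≤ 4 := hπ.trans Real.pi_le_four
    have : (1 : ℝ) ≤ η ^ 5 := one_le_pow₀ h1.le
    rw [abs_le]; constructor <;> nlinarith [Real.sqrt_nonneg (Lama η)]
end

section
/- One has Λᵃ(0) = 0, Λᵃ(π) = 10, Λᵒ(0) = 60 and Λᵒ(π) = 12, and for every η ∈ (0, π) one has 0 < Λᵃ(η) < 10 and 12 < Λᵒ(η) < 60. -/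
open Real

theorem stmt_2 :
    Lama 0 = 0 ∧ Lama Real.pi = 10 ∧ Lamo 0 = 60 ∧ Lamo Real.pi = 12 ∧
    ∀ η ∈ Set.Ioo (0 : ℝ) Real.pi,
      0 < Lama η ∧ Lama η < 10 ∧ 12 < Lamo η ∧ Lamo η < 60 := by
  have h225 : Real.sqrt 225 = 15 := by
    rw [show (225:ℝ) = 15 ^ 2 by norm_num, Real.sqrt_sq (by norm_num)]
  refine ⟨?_, ?_, ?_, ?_, ?_⟩
  · simp [Lama]
  · simp [Lama, Delta, Real.cos_pi_div_two, Real.sin_pi_div_two]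
    norm_num
  · simp [Lamo, Delta]
    norm_num [h225]
  · simp [Lamo, Delta, Real.cos_pi_div_two, Real.sin_pi_div_two]
    norm_num
  · rintro η ⟨h0, hπ⟩
    set s := Real.sin (η / 2) with hs_def
    set co := Real.cos (η / 2) with hc_def
    have hs : 0 < s := Real.sin_pos_of_pos_of_lt_pi (by linarith) (by linarith [Real.pi_pos])
    have hc : 0 < co := Real.cos_pos_of_mem_Ioo ⟨by linarith [Real.pi_pos], by linarith⟩
    have pyth : s ^ 2 + co ^ 2 = 1 := Real.sin_sq_add_cos_sq _
    have hs1 : s < 1 := by nlinarith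
    have hc1 : co < 1 := by nlinarith
    have hΔpos : 0 < Delta η := by
      unfold Delta; rw [← hc_def]; nlinarith
    set r := Real.sqrt (Delta η) with hr_def
    have hr0 : 0 ≤ r := Real.sqrt_nonneg _
    have hr2 : r ^ 2 = 1 + 268 * co ^ 2 - 44 * co ^ 4 := by
      rw [hr_def, Real.sq_sqrt hΔpos.le]; unfold Delta; rw [← hc_def]
    have hD : 0 < 11 + 4 * co ^ 2 + r := by positivity
    have hD2 : 0 < 1 + s ^ 2 := by positivity
    have hLama : Lama η = 120 * s ^ 2 / (11 + 4 * co ^ 2 + r) := rfl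
    have hLamo : Lamo η = (22 + 8 * co ^ 2 + 2 * r) / (1 + s ^ 2) := rfl
    refine ⟨?_, ?_, ?_, ?_⟩
    · rw [hLama]; positivity
    · rw [hLama, div_lt_iff₀ hD]
      nlinarith [sq_nonneg (r + 1 - 16 * co ^ 2), mul_pos (mul_pos hc hc) (sub_pos.mpr hc1), mul_pos hc hc]
    · rw [hLamo, lt_div_iff₀ hD2]
      nlinarith [sq_nonneg (r + 1 - 10 * co ^ 2), mul_pos hc hc]
    · rw [hLamo, div_lt_iff₀ hD2]
      nlinarith [sq_nonneg (r - 49 + 34 * co ^ 2), mul_pos hc hc]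
end

section
/- The acoustic Fourier symbol Λᵃ is strictly increasing on [0, π], and the optic Fourier symbol Λᵒ is strictly decreasing on [0, π]. -/
open Real

lemma aux_key {a b : ℝ} (ha : a ∈ Set.Icc (0 : ℝ) Real.pi)
    (hb : b ∈ Set.Icc (0 : ℝ) Real.pi) (hab : a < b) :
    Lama a < Lama b ∧ Lamo b < Lamo a := by
  obtain ⟨ha0, haπ⟩ := ha
  obtain ⟨hb0, hbπ⟩ := hb
  have hπ := Real.pi_pos
  have hc : Real.cos (b / 2) < Real.cos (a / 2) :=
    Real.strictAntiOn_cos ⟨by linarith, by linarith⟩ ⟨by linarith, by linarith⟩ (by linarith)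
  have hs : Real.sin (a / 2) < Real.sin (b / 2) :=
    Real.strictMonoOn_sin ⟨by linarith, by linarith⟩ ⟨by linarith, by linarith⟩ (by linarith)
  have hcb0 : 0 ≤ Real.cos (b / 2) :=
    Real.cos_nonneg_of_mem_Icc ⟨by linarith, by linarith⟩
  have hca1 : Real.cos (a / 2) ≤ 1 := Real.cos_le_one _
  have hsa0 : 0 ≤ Real.sin (a / 2) :=
    Real.sin_nonneg_of_nonneg_of_le_pi (by linarith) (by linarith)
  have hsb1 : Real.sin (b / 2) ≤ 1 := Real.sin_le_one _
  have hc2 : Real.cos (b / 2) ^ 2 < Real.cos (a / 2) ^ 2 := by nlinarith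
  have hs2 : Real.sin (a / 2) ^ 2 < Real.sin (b / 2) ^ 2 := by nlinarith
  have hca2 : Real.cos (a / 2) ^ 2 ≤ 1 := by nlinarith
  have hcb2 : 0 ≤ Real.cos (b / 2) ^ 2 := sq_nonneg _
  have hΔb0 : 0 ≤ Delta b := by unfold Delta; nlinarith
  have hΔ : Delta b < Delta a := by unfold Delta; nlinarith
  have hsq : Real.sqrt (Delta b) < Real.sqrt (Delta a) := Real.sqrt_lt_sqrt hΔb0 hΔ
  have hsqb0 : 0 ≤ Real.sqrt (Delta b) := Real.sqrt_nonneg _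
  constructor
  · unfold Lama
    have hDb : (0 : ℝ) < 11 + 4 * Real.cos (b / 2) ^ 2 + Real.sqrt (Delta b) := by positivity
    calc 120 * Real.sin (a / 2) ^ 2 / (11 + 4 * Real.cos (a / 2) ^ 2 + Real.sqrt (Delta a))
        ≤ 120 * Real.sin (a / 2) ^ 2 / (11 + 4 * Real.cos (b / 2) ^ 2 + Real.sqrt (Delta b)) :=
          div_le_div_of_nonneg_left (by positivity) hDb (by linarith)
      _ < 120 * Real.sin (b / 2) ^ 2 / (11 + 4 * Real.cos (b / 2) ^ 2 + Real.sqrt (Delta b)) :=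
          (div_lt_div_iff_of_pos_right hDb).mpr (by nlinarith)
  · unfold Lamo
    have hMb : (0 : ℝ) < 1 + Real.sin (a / 2) ^ 2 := by positivity
    calc (22 + 8 * Real.cos (b / 2) ^ 2 + 2 * Real.sqrt (Delta b)) / (1 + Real.sin (b / 2) ^ 2)
        ≤ (22 + 8 * Real.cos (b / 2) ^ 2 + 2 * Real.sqrt (Delta b)) / (1 + Real.sin (a / 2) ^ 2) :=
          div_le_div_of_nonneg_left (by positivity) hMb (by linarith)
      _ < (22 + 8 * Real.cos (a / 2) ^ 2 + 2 * Real.sqrt (Delta a)) / (1 + Real.sin (a / 2) ^ 2) :=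
          (div_lt_div_iff_of_pos_right hMb).mpr (by linarith)

theorem stmt_3 :
    StrictMonoOn Lama (Set.Icc (0 : ℝ) Real.pi) ∧
    StrictAntiOn Lamo (Set.Icc (0 : ℝ) Real.pi) := by
  exact ⟨fun a ha b hb hab => (aux_key ha hb hab).1,
         fun a ha b hb hab => (aux_key ha hb hab).2⟩
end

section
/- For every η ∈ [0, π], and for Λ = Λᵃ(η) as well as for Λ = Λᵒ(η), one has cos η·(Λ² + 16Λ + 240) = 3Λ² − 104Λ + 240 (i.e. cos η = w(Λ)), and consequently sin²(η/2)·(Λ² + 16Λ + 240) = Λ·(60 − Λ) and cos²(η/2)·(Λ² + 16Λ + 240) = 2·(Λ − 10)·(Λ − 12). -/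
open Real

theorem stmt_4 :
    ∀ η ∈ Set.Icc (0 : ℝ) Real.pi, ∀ Λ : ℝ, (Λ = Lama η ∨ Λ = Lamo η) →
      Real.cos η * (Λ ^ 2 + 16 * Λ + 240) = 3 * Λ ^ 2 - 104 * Λ + 240 ∧
      Real.sin (η / 2) ^ 2 * (Λ ^ 2 + 16 * Λ + 240) = Λ * (60 - Λ) ∧
      Real.cos (η / 2) ^ 2 * (Λ ^ 2 + 16 * Λ + 240) = 2 * (Λ - 10) * (Λ - 12) := by
  intro η hη Λ hΛ
  set c := Real.cos (η / 2) with hc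
  set s := Real.sin (η / 2) with hs
  have hpyth : s ^ 2 = 1 - c ^ 2 := by
    have := Real.sin_sq_add_cos_sq (η / 2); linarith
  have hc1 : c ^ 2 ≤ 1 := by
    have := Real.neg_one_le_cos (η / 2); have := Real.cos_le_one (η / 2); nlinarith
  have hD : (0 : ℝ) ≤ Delta η := by
    unfold Delta; rw [← hc]; nlinarith [sq_nonneg c, sq_nonneg (c ^ 2)]
  set r := Real.sqrt (Delta η) with hrdef
  have hr0 : 0 ≤ r := Real.sqrt_nonneg _
  have hr2 : r ^ 2 = 1 + 268 * c ^ 2 - 44 * c ^ 4 := by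
    rw [hrdef, sq_sqrt hD]; unfold Delta; rw [← hc]
  have hcos : Real.cos η = 2 * c ^ 2 - 1 := by
    have h2 : (2 : ℝ) * (η / 2) = η := by ring
    have := Real.cos_two_mul (η / 2)
    rw [h2, ← hc] at this; linarith
  -- the key quadratic
  have hq : (2 - c ^ 2) * Λ ^ 2 - (44 + 16 * c ^ 2) * Λ + 240 * (1 - c ^ 2) = 0 := by
    rcases hΛ with h | h
    · -- acoustic
      have hd : (0 : ℝ) < 11 + 4 * c ^ 2 + r := by nlinarith [sq_nonneg c]
      have h1 : Λ * (11 + 4 * c ^ 2 + r) = 120 * s ^ 2 := by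
        rw [h]; unfold Lama; rw [← hc, ← hs, ← hrdef]
        field_simp
      have key : ((2 - c ^ 2) * Λ ^ 2 - (44 + 16 * c ^ 2) * Λ + 240 * (1 - c ^ 2)) *
          (11 + 4 * c ^ 2 + r) ^ 2 = 0 := by
        rw [hpyth] at h1
        linear_combination ((2 - c ^ 2) * (Λ * (11 + 4 * c ^ 2 + r) + 120 * (1 - c ^ 2))
            - (44 + 16 * c ^ 2) * (11 + 4 * c ^ 2 + r)) * h1
          + (240 * (1 - c ^ 2)) * hr2
      have hd2 : (11 + 4 * c ^ 2 + r) ^ 2 ≠ 0 := pow_ne_zero _ (ne_of_gt hd)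
      exact (mul_eq_zero.mp key).resolve_right hd2
    · -- optic
      have hd : (0 : ℝ) < 1 + s ^ 2 := by positivity
      have h1 : Λ * (1 + s ^ 2) = 22 + 8 * c ^ 2 + 2 * r := by
        rw [h]; unfold Lamo; rw [← hc, ← hs, ← hrdef]
        field_simp
      rw [hpyth] at h1
      have key : ((2 - c ^ 2) * Λ ^ 2 - (44 + 16 * c ^ 2) * Λ + 240 * (1 - c ^ 2)) *
          (2 - c ^ 2) = 0 := by
        linear_combination ((2 - c ^ 2) * Λ + 2 * r - 22 - 8 * c ^ 2) * h1 + 4 * hr2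
      have hd2 : (2 : ℝ) - c ^ 2 ≠ 0 := by nlinarith
      exact (mul_eq_zero.mp key).resolve_right hd2
  refine ⟨?_, ?_, ?_⟩
  · linear_combination (Λ ^ 2 + 16 * Λ + 240) * hcos - 2 * hq
  · linear_combination (Λ ^ 2 + 16 * Λ + 240) * hpyth + hq
  · linear_combination -hq
end

section
/- Let 1 ≤ k ≤ N and let Λ be either Λᵃ(kπh) or Λᵒ(kπh). Then Λ ≠ 10 and the vector φ with nodal components φ_j = sin(kπx_j) and midpoint components φ_{j+1/2} = ((40+Λ)/(8(10−Λ)))·(φ_j + φ_{j+1}) satisfies both P2 spectral equations with eigenvalue Λ; that is, (Λ/h², φ) is a generalized eigenpair of the P2 stiffness/mass system. -/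
/-!
With `c = cos (η / 2)`, both symbols are roots of the P2 dispersion quadratic
`(2 - c²) Λ² - 4 (11 + 4c²) Λ + 240 (1 - c²)`, whose discriminant is `16 Δ(η)`: `Λᵒ` is the root
with `+ √Δ` and `Λᵃ` the root with `- √Δ`, written with a rationalized numerator. Since the value
of the quadratic at `Λ = 10` is `-500 c²`, `Λ ≠ 10` as soon as `c ≠ 0`. The midpoint equation is
then solved by the given midpoint values for arbitrary nodal values, and after eliminating the
midpoint values the nodal equation reduces, via `φ_{j-1} + φ_{j+1} = 2 cos η φ_j` for
`φ_j = sin (j η)`, to a multiple of the dispersion quadratic.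
-/

open Real

def p2Dispersion (c Λ : ℝ) : ℝ :=
  (2 - c ^ 2) * Λ ^ 2 - 4 * (11 + 4 * c ^ 2) * Λ + 240 * (1 - c ^ 2)

lemma sq_sqrt_Delta (η : ℝ) :
    √(Delta η) ^ 2 = 1 + 268 * cos (η / 2) ^ 2 - 44 * cos (η / 2) ^ 4 := by
  have hc := cos_sq_le_one (η / 2)
  rw [sq_sqrt (by unfold Delta; nlinarith [sq_nonneg (cos (η / 2))]), Delta]

lemma p2Dispersion_Lama (η : ℝ) : p2Dispersion (cos (η / 2)) (Lama η) = 0 := by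
  have hr := sq_sqrt_Delta η
  have hden : 0 < 11 + 4 * cos (η / 2) ^ 2 + √(Delta η) := by positivity
  rw [Lama, sin_sq, p2Dispersion]
  field_simp
  linear_combination (240 - 240 * cos (η / 2) ^ 2) * hr

lemma p2Dispersion_Lamo (η : ℝ) : p2Dispersion (cos (η / 2)) (Lamo η) = 0 := by
  have hr := sq_sqrt_Delta η
  have hden : 0 < 2 - cos (η / 2) ^ 2 := by nlinarith [cos_sq_le_one (η / 2)]
  rw [Lamo, sin_sq, p2Dispersion, show 1 + (1 - cos (η / 2) ^ 2) = 2 - cos (η / 2) ^ 2 by ring]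
  field_simp
  linear_combination 4 * hr

lemma ne_ten_of_p2Dispersion_eq_zero {c Λ : ℝ} (hc : c ≠ 0) (hΛ : p2Dispersion c Λ = 0) :
    Λ ≠ 10 := by
  rintro rfl
  have : p2Dispersion c 10 = -500 * c ^ 2 := by unfold p2Dispersion; ring
  exact hc (by simpa [this] using hΛ)

lemma p2_midpoint_eq {Λ : ℝ} (hΛ : Λ ≠ 10) (p q : ℝ) :
    -(8 / 3) * p + (16 / 3) * ((40 + Λ) / (8 * (10 - Λ)) * (p + q)) - (8 / 3) * q
      - Λ * ((1 / 15) * p + (8 / 15) * ((40 + Λ) / (8 * (10 - Λ)) * (p + q)) + (1 / 15) * q)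
      = 0 := by
  have : 10 - Λ ≠ 0 := sub_ne_zero.mpr hΛ.symm
  field_simp
  ring

lemma p2_nodal_eq {c Λ : ℝ} (hΛ : Λ ≠ 10) (hdisp : p2Dispersion c Λ = 0) {p₀ p₁ p₂ : ℝ}
    (hrec : p₀ + p₂ = 2 * (2 * c ^ 2 - 1) * p₁) :
    (1 / 3) * p₀ - (8 / 3) * ((40 + Λ) / (8 * (10 - Λ)) * (p₀ + p₁)) + (14 / 3) * p₁
      - (8 / 3) * ((40 + Λ) / (8 * (10 - Λ)) * (p₁ + p₂)) + (1 / 3) * p₂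
      - Λ * (-(1 / 30) * p₀ + (1 / 15) * ((40 + Λ) / (8 * (10 - Λ)) * (p₀ + p₁))
          + (4 / 15) * p₁ + (1 / 15) * ((40 + Λ) / (8 * (10 - Λ)) * (p₁ + p₂))
          - (1 / 30) * p₂) = 0 := by
  obtain rfl : p₀ = 2 * (2 * c ^ 2 - 1) * p₁ - p₂ := by linarith
  have : 10 - Λ ≠ 0 := sub_ne_zero.mpr hΛ.symm
  unfold p2Dispersion at hdisp
  field_simp
  linear_combination 1800 * p₁ * hdisp

lemma sin_sub_add_sin_add (x η : ℝ) :
    sin (x - η) + sin (x + η) = 2 * (2 * cos (η / 2) ^ 2 - 1) * sin x := by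
  rw [sin_sub, sin_add, cos_sq, mul_div_cancel₀ η two_ne_zero]
  ring
theorem stmt_7_general (N : ℕ) (h : ℝ) (hh : h = 1 / ((N : ℝ) + 1))
    (k : ℕ) (hkN : k ≤ N)
    (Λ : ℝ) (hΛ : Λ = Lama ((k : ℝ) * Real.pi * h) ∨ Λ = Lamo ((k : ℝ) * Real.pi * h))
    (φ : ℕ → ℝ) (hφ : ∀ j : ℕ, φ j = Real.sin ((k : ℝ) * Real.pi * ((j : ℝ) * h)))
    (ψ : ℕ → ℝ)
    (hψ : ∀ j : ℕ, ψ j = (40 + Λ) / (8 * (10 - Λ)) * (φ j + φ (j + 1))) :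
    Λ ≠ 10 ∧ φ 0 = 0 ∧ φ (N + 1) = 0 ∧
    (∀ j : ℕ, j ≤ N →
      -(8 / 3) * φ j + (16 / 3) * ψ j - (8 / 3) * φ (j + 1)
        - Λ * ((1 / 15) * φ j + (8 / 15) * ψ j + (1 / 15) * φ (j + 1)) = 0) ∧
    (∀ j : ℕ, 1 ≤ j → j ≤ N →
      (1 / 3) * φ (j - 1) - (8 / 3) * ψ (j - 1) + (14 / 3) * φ j - (8 / 3) * ψ j
        + (1 / 3) * φ (j + 1)
        - Λ * (-(1 / 30) * φ (j - 1) + (1 / 15) * ψ (j - 1) + (4 / 15) * φ j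
            + (1 / 15) * ψ j - (1 / 30) * φ (j + 1)) = 0) := by
  set η := (k : ℝ) * π * h with hηdef
  have hφη (j : ℕ) : φ j = sin (j * η) := by rw [hφ, hηdef]; ring_nf
  have hη₀ : 0 ≤ η := by rw [hηdef, hh]; positivity
  have hηπ : η < π := by
    have hk : (k : ℝ) < N + 1 := by exact_mod_cast Nat.lt_succ_of_le hkN
    rw [show η = k / (N + 1) * π by rw [hηdef, hh]; ring]
    exact mul_lt_of_lt_one_left pi_pos ((div_lt_one (by positivity)).mpr hk)
  have hc : cos (η / 2) ≠ 0 :=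
    (cos_pos_of_mem_Ioo ⟨by linarith [pi_pos], by linarith⟩).ne'
  have hdisp : p2Dispersion (cos (η / 2)) Λ = 0 := by
    rcases hΛ with rfl | rfl
    exacts [p2Dispersion_Lama η, p2Dispersion_Lamo η]
  have h10 := ne_ten_of_p2Dispersion_eq_zero hc hdisp
  refine ⟨h10, by simp [hφη], ?_, fun j _ ↦ by rw [hψ]; exact p2_midpoint_eq h10 _ _, ?_⟩
  · rw [hφ, hh]
    push_cast
    rw [show (k : ℝ) * π * ((N + 1) * (1 / (N + 1))) = k * π by field_simp]
    exact sin_nat_mul_pi k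
  · rintro j hj -
    obtain ⟨i, rfl⟩ : ∃ i, j = i + 1 := ⟨j - 1, by omega⟩
    simp only [Nat.add_sub_cancel, hψ]
    refine p2_nodal_eq h10 hdisp ?_
    simp only [hφη, Nat.cast_add, Nat.cast_one]
    convert sin_sub_add_sin_add ((i + 1) * η) η using 3 <;> ring

theorem stmt_7 (N : ℕ) (hN : 1 ≤ N) (h : ℝ) (hh : h = 1 / ((N : ℝ) + 1))
    (k : ℕ) (hk1 : 1 ≤ k) (hkN : k ≤ N)
    (Λ : ℝ) (hΛ : Λ = Lama ((k : ℝ) * Real.pi * h) ∨ Λ = Lamo ((k : ℝ) * Real.pi * h))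
    (φ : ℕ → ℝ) (hφ : ∀ j : ℕ, φ j = Real.sin ((k : ℝ) * Real.pi * ((j : ℝ) * h)))
    (ψ : ℕ → ℝ)
    (hψ : ∀ j : ℕ, ψ j = (40 + Λ) / (8 * (10 - Λ)) * (φ j + φ (j + 1))) :
    Λ ≠ 10 ∧ φ 0 = 0 ∧ φ (N + 1) = 0 ∧
    (∀ j : ℕ, j ≤ N →
      -(8 / 3) * φ j + (16 / 3) * ψ j - (8 / 3) * φ (j + 1)
        - Λ * ((1 / 15) * φ j + (8 / 15) * ψ j + (1 / 15) * φ (j + 1)) = 0) ∧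
    (∀ j : ℕ, 1 ≤ j → j ≤ N →
      (1 / 3) * φ (j - 1) - (8 / 3) * ψ (j - 1) + (14 / 3) * φ j - (8 / 3) * ψ j
        + (1 / 3) * φ (j + 1)
        - Λ * (-(1 / 30) * φ (j - 1) + (1 / 15) * ψ (j - 1) + (4 / 15) * φ j
            + (1 / 15) * ψ j - (1 / 30) * φ (j + 1)) = 0) :=
  stmt_7_general N h hh k hkN Λ hΛ φ hφ ψ hψ
end

section
/- The one-sided derivatives of Λᵃ and Λᵒ on [0, π] vanish at both endpoints: (Λᵃ)'(0) = (Λᵃ)'(π) = (Λᵒ)'(0) = (Λᵒ)'(π) = 0. Moreover, for the dispersion relations λᵃ = √Λᵃ and λᵒ = √Λᵒ one has lim_{η→0⁺} λᵃ(η)/η = 1, (λᵃ)'(π) = 0, and (λᵒ)'(0) = (λᵒ)'(π) = 0 (one-sided derivatives within [0, π]). -/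
open Real Filter

noncomputable def lama (η : ℝ) : ℝ := Real.sqrt (Lama η)

noncomputable def lamo (η : ℝ) : ℝ := Real.sqrt (Lamo η)

/-!
Since `sin²(η/2) = 1 - cos²(η/2)`, both `Λᵃ` and `Λᵒ` are functions of
`u = cos²(η/2) = (1 + cos η)/2` that are smooth on `[0, 1]` (there `Δ ≥ 1`). As
`du/dη = -sin η / 2` vanishes at `0` and `π`, so do the derivatives of `Λᵃ` and `Λᵒ`, and of
their square roots wherever these are nonzero: `Λᵃ(π) > 0` and `Λᵒ > 0` everywhere. Near `0`,
`Λᵃ(η)/η² = 30 sinc²(η/2) / (11 + 4u + √Δ)`, and the denominator tends to `30`.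
-/

lemma HasDerivAt.sqrt_of_deriv_zero {f : ℝ → ℝ} {x : ℝ} (hf : HasDerivAt f 0 x)
    (hx : f x ≠ 0) :
    HasDerivAt (fun y => √(f y)) 0 x := by
  simpa using hf.sqrt hx

theorem hasDerivAt_comp_cos_half_sq {F : ℝ → ℝ} {x : ℝ}
    (hF : DifferentiableAt ℝ F (cos (x / 2) ^ 2)) (hx : sin x = 0) :
    HasDerivAt (fun η => F (cos (η / 2) ^ 2)) 0 x := by
  have hcos_sq : (fun η => cos (η / 2) ^ 2) = fun η => 1 / 2 + cos η / 2 := by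
    funext η
    rw [cos_sq, mul_div_cancel₀ η two_ne_zero]
  have hu : HasDerivAt (fun η => cos (η / 2) ^ 2) 0 x := by
    rw [hcos_sq]
    simpa [hx] using ((hasDerivAt_cos x).div_const 2).const_add (1 / 2)
  simpa [Function.comp_def] using hF.hasDerivAt.comp x hu

-- `Λᵃ` and `Λᵒ` as functions of `u = cos²(η/2)`, with `sin²(η/2) = 1 - u`.
noncomputable def acousticOfCosSq (u : ℝ) : ℝ :=
  120 * (1 - u) / (11 + 4 * u + √(1 + 268 * u - 44 * u ^ 2))

noncomputable def opticOfCosSq (u : ℝ) : ℝ :=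
  (22 + 8 * u + 2 * √(1 + 268 * u - 44 * u ^ 2)) / (2 - u)

lemma one_le_delta_poly_of_mem_Icc {u : ℝ} (hu : u ∈ Set.Icc (0 : ℝ) 1) :
    1 ≤ 1 + 268 * u - 44 * u ^ 2 := by
  nlinarith [hu.1, hu.2]

lemma differentiableAt_acousticOfCosSq {u : ℝ} (hu : u ∈ Set.Icc (0 : ℝ) 1) :
    DifferentiableAt ℝ acousticOfCosSq u := by
  have hΔ := one_le_delta_poly_of_mem_Icc hu
  have hden : 0 < 11 + 4 * u + √(1 + 268 * u - 44 * u ^ 2) := by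
    linarith [hu.1, sqrt_nonneg (1 + 268 * u - 44 * u ^ 2)]
  unfold acousticOfCosSq
  fun_prop (disch := first | exact hden.ne' | exact (zero_lt_one.trans_le hΔ).ne')

lemma differentiableAt_opticOfCosSq {u : ℝ} (hu : u ∈ Set.Icc (0 : ℝ) 1) :
    DifferentiableAt ℝ opticOfCosSq u := by
  have hΔ := one_le_delta_poly_of_mem_Icc hu
  have hden : (2 : ℝ) - u ≠ 0 := by linarith [hu.2]
  unfold opticOfCosSq
  fun_prop (disch := first | exact hden | exact (zero_lt_one.trans_le hΔ).ne')

lemma cos_half_sq_mem_Icc (x : ℝ) : cos (x / 2) ^ 2 ∈ Set.Icc (0 : ℝ) 1 :=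
  ⟨sq_nonneg _, cos_sq_le_one _⟩

lemma Lama_eq_comp : Lama = fun η => acousticOfCosSq (cos (η / 2) ^ 2) := by
  funext η
  simp only [Lama, Delta, acousticOfCosSq, sin_sq]
  ring_nf

lemma Lamo_eq_comp : Lamo = fun η => opticOfCosSq (cos (η / 2) ^ 2) := by
  funext η
  simp only [Lamo, Delta, opticOfCosSq, sin_sq]
  ring_nf

lemma hasDerivAt_Lama_of_sin_eq_zero {x : ℝ} (hx : sin x = 0) : HasDerivAt Lama 0 x := by
  rw [Lama_eq_comp]
  exact hasDerivAt_comp_cos_half_sq (differentiableAt_acousticOfCosSq (cos_half_sq_mem_Icc x)) hx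

lemma hasDerivAt_Lamo_of_sin_eq_zero {x : ℝ} (hx : sin x = 0) : HasDerivAt Lamo 0 x := by
  rw [Lamo_eq_comp]
  exact hasDerivAt_comp_cos_half_sq (differentiableAt_opticOfCosSq (cos_half_sq_mem_Icc x)) hx

noncomputable def acousticDenom (η : ℝ) : ℝ := 11 + 4 * cos (η / 2) ^ 2 + √(Delta η)

lemma acousticDenom_pos (η : ℝ) : 0 < acousticDenom η := by
  unfold acousticDenom; positivity

lemma acousticDenom_zero : acousticDenom 0 = 30 := by
  have : √(225 : ℝ) = 15 := by
    rw [show (225 : ℝ) = 15 ^ 2 by norm_num, sqrt_sq (by norm_num)]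
  norm_num [acousticDenom, Delta, this]

lemma continuous_acousticDenom : Continuous acousticDenom := by
  unfold acousticDenom Delta; fun_prop

lemma Lama_pos {η : ℝ} (h : sin (η / 2) ≠ 0) : 0 < Lama η := by
  have := acousticDenom_pos η
  unfold Lama; positivity

lemma Lamo_pos (η : ℝ) : 0 < Lamo η := by
  unfold Lamo; positivity

lemma Lama_eq_div_acousticDenom (η : ℝ) : Lama η = 120 * sin (η / 2) ^ 2 / acousticDenom η := rfl

lemma lama_div_self_eq {η : ℝ} (hη : 0 < η) :
    lama η / η = √(30 * sinc (η / 2) ^ 2 / acousticDenom η) := by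
  have hD := (acousticDenom_pos η).ne'
  rw [lama, ← sqrt_sq hη.le, ← sqrt_div' _ (sq_nonneg η), sqrt_sq hη.le,
    sinc_of_ne_zero (by positivity), Lama_eq_div_acousticDenom]
  congr 1
  field_simp
  ring

lemma tendsto_lama_div_self :
    Tendsto (fun η => lama η / η) (nhdsWithin 0 (Set.Ioi 0)) (nhds 1) := by
  have hcont : Continuous fun η => √(30 * sinc (η / 2) ^ 2 / acousticDenom η) := by
    have := continuous_acousticDenom
    fun_prop (disch := exact fun x => (acousticDenom_pos x).ne')
  have h := hcont.tendsto 0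
  rw [zero_div, sinc_zero, acousticDenom_zero] at h
  norm_num at h
  refine (h.mono_left nhdsWithin_le_nhds).congr' ?_
  filter_upwards [self_mem_nhdsWithin] with η hη using (lama_div_self_eq hη).symm

theorem stmt_11 :
    HasDerivWithinAt Lama 0 (Set.Icc (0 : ℝ) Real.pi) 0 ∧
    HasDerivWithinAt Lama 0 (Set.Icc (0 : ℝ) Real.pi) Real.pi ∧
    HasDerivWithinAt Lamo 0 (Set.Icc (0 : ℝ) Real.pi) 0 ∧
    HasDerivWithinAt Lamo 0 (Set.Icc (0 : ℝ) Real.pi) Real.pi ∧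
    Filter.Tendsto (fun η => lama η / η) (nhdsWithin 0 (Set.Ioi (0 : ℝ))) (nhds 1) ∧
    HasDerivWithinAt lama 0 (Set.Icc (0 : ℝ) Real.pi) Real.pi ∧
    HasDerivWithinAt lamo 0 (Set.Icc (0 : ℝ) Real.pi) 0 ∧
    HasDerivWithinAt lamo 0 (Set.Icc (0 : ℝ) Real.pi) Real.pi := by
  refine ⟨?_, ?_, ?_, ?_, tendsto_lama_div_self, ?_, ?_, ?_⟩ <;> apply HasDerivAt.hasDerivWithinAt
  · exact hasDerivAt_Lama_of_sin_eq_zero sin_zero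
  · exact hasDerivAt_Lama_of_sin_eq_zero sin_pi
  · exact hasDerivAt_Lamo_of_sin_eq_zero sin_zero
  · exact hasDerivAt_Lamo_of_sin_eq_zero sin_pi
  · exact (hasDerivAt_Lama_of_sin_eq_zero sin_pi).sqrt_of_deriv_zero (Lama_pos (by simp)).ne'
  · exact (hasDerivAt_Lamo_of_sin_eq_zero sin_zero).sqrt_of_deriv_zero (Lamo_pos 0).ne'
  · exact (hasDerivAt_Lamo_of_sin_eq_zero sin_pi).sqrt_of_deriv_zero (Lamo_pos π).ne'
end

section
/- Let N be an odd positive integer, h = 1/(N+1), and let U_0, …, U_{N+1} be real numbers with U_0 = U_{N+1} = 0 satisfying the bi-grid condition U_{2j+1} = (U_{2j} + U_{2j+2})/2 for 0 ≤ j ≤ (N−1)/2. Then for every 1 ≤ k ≤ N: Σ_{j=1}^{N} U_j·sin(kπjh) = 2·cos²(kπh/2)·Σ_{j=1}^{(N−1)/2} U_{2j}·sin(2kπjh). In particular, for k = (N+1)/2 the sum Σ_{j=1}^{N} U_j·sin(kπjh) vanishes. -/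
open Real Finset

/-! With θ = kπh, substitute the bi-grid relation for the odd nodes and shift the index in the
`U (2j+2)` half; the boundary terms vanish since `U 0 = U (N+1) = 0`. Each even node `U (2j)` then
collects `sin (2jθ) + (sin ((2j+1)θ) + sin ((2j-1)θ)) / 2 = (1 + cos θ) sin (2jθ)
= 2 cos² (θ/2) sin (2jθ)`. For `k = (N+1)/2` we have `θ = π/2`, so every `sin (2jθ) = sin (jπ)`
vanishes. -/

lemma Finset.sum_range_two_mul_eq_sum_pairs {M : Type*} [AddCommMonoid M] (f : ℕ → M) (n : ℕ) :
    ∑ i ∈ range (2 * n), f i = ∑ j ∈ range n, (f (2 * j) + f (2 * j + 1)) := by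
  induction n with
  | zero => simp
  | succ n ih => rw [Nat.mul_succ, sum_range_succ, sum_range_succ, ih, sum_range_succ, add_assoc]

lemma Finset.sum_Icc_one_eq_sum_range_succ {M : Type*} [AddCommMonoid M] {f : ℕ → M}
    (h0 : f 0 = 0) (n : ℕ) : ∑ i ∈ Icc 1 n, f i = ∑ i ∈ range (n + 1), f i := by
  rw [range_eq_Ico, sum_eq_sum_Ico_succ_bot n.succ_pos, h0, zero_add, zero_add,
    Nat.succ_eq_add_one, Ico_add_one_right_eq_Icc]

lemma Finset.sum_range_shift_of_eq_zero {M : Type*} [AddCommMonoid M] {f : ℕ → M} {n : ℕ}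
    (h0 : f 0 = 0) (hn : f n = 0) : ∑ j ∈ range n, f (j + 1) = ∑ j ∈ range n, f j := by
  have h := sum_range_succ' f n
  rw [sum_range_succ, hn, h0] at h
  simpa using h.symm

lemma Real.two_mul_cos_sq_half_mul_sin (x θ : ℝ) :
    2 * cos (θ / 2) ^ 2 * sin x = sin x + (sin (x + θ) + sin (x - θ)) / 2 := by
  rw [cos_sq, show 2 * (θ / 2) = θ by ring, sin_add, sin_sub]
  ring

theorem sum_mul_sin_of_bigrid (m : ℕ) (U : ℕ → ℝ) (θ : ℝ) (hU0 : U 0 = 0)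
    (hUend : U (2 * m + 2) = 0)
    (hbigrid : ∀ j ≤ m, U (2 * j + 1) = (U (2 * j) + U (2 * j + 2)) / 2) :
    ∑ j ∈ Icc 1 (2 * m + 1), U j * sin (j * θ)
      = 2 * cos (θ / 2) ^ 2 * ∑ j ∈ Icc 1 m, U (2 * j) * sin (2 * j * θ) := by
  have hshift : ∑ j ∈ range (m + 1), U (2 * j + 2) * sin ((2 * j + 1) * θ) / 2
      = ∑ j ∈ range (m + 1), U (2 * j) * sin ((2 * j - 1) * θ) / 2 := by
    rw [← sum_range_shift_of_eq_zero (f := fun j : ℕ ↦ U (2 * j) * sin ((2 * j - 1) * θ) / 2)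
      (by simp [hU0]) (by simp [Nat.mul_succ, hUend])]
    refine sum_congr rfl fun j _ ↦ ?_
    push_cast
    ring_nf
  calc ∑ j ∈ Icc 1 (2 * m + 1), U j * sin (j * θ)
      = ∑ j ∈ range (m + 1),
          (U (2 * j) * sin (2 * j * θ) + U (2 * j + 1) * sin ((2 * j + 1) * θ)) := by
        rw [sum_Icc_one_eq_sum_range_succ (by simp [hU0]), show 2 * m + 1 + 1 = 2 * (m + 1) by ring,
          sum_range_two_mul_eq_sum_pairs]
        push_cast
        rfl
    _ = ∑ j ∈ range (m + 1), ((U (2 * j) * sin (2 * j * θ) + U (2 * j) * sin ((2 * j + 1) * θ) / 2)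
          + U (2 * j + 2) * sin ((2 * j + 1) * θ) / 2) := by
        refine sum_congr rfl fun j hj ↦ ?_
        rw [hbigrid j (Nat.lt_succ_iff.mp (mem_range.mp hj))]
        ring
    _ = ∑ j ∈ range (m + 1), 2 * cos (θ / 2) ^ 2 * (U (2 * j) * sin (2 * j * θ)) := by
        rw [sum_add_distrib, hshift, ← sum_add_distrib]
        refine sum_congr rfl fun j _ ↦ ?_
        rw [mul_left_comm, two_mul_cos_sq_half_mul_sin, add_one_mul, sub_one_mul]
        ring
    _ = 2 * cos (θ / 2) ^ 2 * ∑ j ∈ Icc 1 m, U (2 * j) * sin (2 * j * θ) := by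
        rw [← mul_sum, sum_Icc_one_eq_sum_range_succ (by simp [hU0])]

theorem stmt_13_general (N : ℕ) (hodd : Odd N) (h : ℝ)
    (hh : h = 1 / ((N : ℝ) + 1))
    (U : ℕ → ℝ) (hU0 : U 0 = 0) (hUN : U (N + 1) = 0)
    (hbigrid : ∀ j : ℕ, j ≤ (N - 1) / 2 →
      U (2 * j + 1) = (U (2 * j) + U (2 * j + 2)) / 2) :
    (∀ k : ℕ, 1 ≤ k → k ≤ N →
      ∑ j ∈ Finset.Icc 1 N, U j * Real.sin ((k : ℝ) * Real.pi * (j : ℝ) * h)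
        = 2 * Real.cos ((k : ℝ) * Real.pi * h / 2) ^ 2 *
            ∑ j ∈ Finset.Icc 1 ((N - 1) / 2),
              U (2 * j) * Real.sin (2 * (k : ℝ) * Real.pi * (j : ℝ) * h)) ∧
    ∑ j ∈ Finset.Icc 1 N,
        U j * Real.sin ((((N : ℝ) + 1) / 2) * Real.pi * (j : ℝ) * h) = 0 := by
  obtain ⟨m, rfl⟩ := hodd
  rw [show (2 * m + 1 - 1) / 2 = m by omega] at hbigrid ⊢
  have key (θ : ℝ) := sum_mul_sin_of_bigrid m U θ hU0 hUN hbigrid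
  refine ⟨fun k _ _ ↦ ?_, ?_⟩
  · convert key (k * π * h) using 3 <;> ring_nf
  · have hθ : ((2 * m + 1 : ℕ) + 1 : ℝ) / 2 * π * h = π / 2 := by
      rw [hh]
      field_simp
    calc ∑ j ∈ Icc 1 (2 * m + 1), U j * sin (((2 * m + 1 : ℕ) + 1 : ℝ) / 2 * π * j * h)
        = ∑ j ∈ Icc 1 (2 * m + 1), U j * sin (j * (π / 2)) := by
          refine sum_congr rfl fun j _ ↦ ?_
          rw [← hθ]
          ring_nf
      _ = 0 := by
          rw [key, sum_eq_zero fun j _ ↦ ?_, mul_zero]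
          rw [show 2 * (j : ℝ) * (π / 2) = j * π by ring, sin_nat_mul_pi, mul_zero]

theorem stmt_13 (N : ℕ) (hodd : Odd N) (hN : 1 ≤ N) (h : ℝ)
    (hh : h = 1 / ((N : ℝ) + 1))
    (U : ℕ → ℝ) (hU0 : U 0 = 0) (hUN : U (N + 1) = 0)
    (hbigrid : ∀ j : ℕ, j ≤ (N - 1) / 2 →
      U (2 * j + 1) = (U (2 * j) + U (2 * j + 2)) / 2) :
    (∀ k : ℕ, 1 ≤ k → k ≤ N →
      ∑ j ∈ Finset.Icc 1 N, U j * Real.sin ((k : ℝ) * Real.pi * (j : ℝ) * h)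
        = 2 * Real.cos ((k : ℝ) * Real.pi * h / 2) ^ 2 *
            ∑ j ∈ Finset.Icc 1 ((N - 1) / 2),
              U (2 * j) * Real.sin (2 * (k : ℝ) * Real.pi * (j : ℝ) * h)) ∧
    ∑ j ∈ Finset.Icc 1 N,
        U j * Real.sin ((((N : ℝ) + 1) / 2) * Real.pi * (j : ℝ) * h) = 0 :=
  stmt_13_general N hodd h hh U hU0 hUN hbigrid
end

section
/- Let N be an odd positive integer, h = 1/(N+1), and let U_0, …, U_{N+1} be real numbers with U_0 = U_{N+1} = 0 satisfying the bi-grid condition U_{2j+1} = (U_{2j} + U_{2j+2})/2 for 0 ≤ j ≤ (N−1)/2. Then for every 1 ≤ k ≤ N: cos²((N+1−k)πh/2)·Σ_{j=1}^{N} U_j·sin(kπjh) + cos²(kπh/2)·Σ_{j=1}^{N} U_j·sin((N+1−k)πjh) = 0; i.e., the high-frequency Fourier coefficient at index N+1−k is determined by the low-frequency one at index k. -/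
/-!
With `a = kπh` the second frequency is `π - a`, so `cos²((π - a)/2) = sin²(a/2)` and
`sin((π - a) j) = -(-1)^j sin(a j)`: the claim becomes
`∑ U_j (sin²(a/2) - (-1)^j cos²(a/2)) sin(a j) = 0`, and this holds for every real `a`.
The weight is `-cos a` at even nodes and `1` at odd ones. Substituting the bi-grid values at the
odd nodes and using `sin((2i+1)a) + sin((2i-1)a) = 2 cos a sin(2ia)`, the partial sums up to `2m`
telescope to the boundary term `U_{2m} sin((2m-1)a)/2`, which vanishes at `2m = N + 1`.
-/

open Real Finset

theorem sum_Icc_one_eq_sum_range {M : Type*} [AddCommMonoid M] {f : ℕ → M} (h0 : f 0 = 0)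
    (n : ℕ) : ∑ j ∈ Icc 1 n, f j = ∑ j ∈ range (n + 1), f j := by
  rw [range_eq_Ico, sum_eq_sum_Ico_succ_bot (by omega), h0, zero_add, Ico_add_one_right_eq_Icc]

theorem sum_range_two_mul_weighted_sin_of_bigrid {U : ℕ → ℝ} (a : ℝ) (hU0 : U 0 = 0) {m : ℕ}
    (hbg : ∀ i < m, U (2 * i + 1) = (U (2 * i) + U (2 * i + 2)) / 2) :
    ∑ j ∈ range (2 * m), U j * (sin (a / 2) ^ 2 - cos (a / 2) ^ 2 * (-1) ^ j) * sin (a * j)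
      = U (2 * m) * sin (a * (2 * m - 1)) / 2 := by
  induction m with
  | zero => simp [hU0]
  | succ m ih =>
    have hs : sin (a / 2) ^ 2 = (1 - cos a) / 2 := by
      rw [sin_sq, cos_sq, show 2 * (a / 2) = a by ring]; ring
    have hc : cos (a / 2) ^ 2 = (1 + cos a) / 2 := by
      rw [cos_sq, show 2 * (a / 2) = a by ring]; ring
    have heven : (-1 : ℝ) ^ (2 * m) = 1 := by rw [pow_mul, neg_one_sq, one_pow]
    rw [show 2 * (m + 1) = 2 * m + 1 + 1 by ring, sum_range_succ, sum_range_succ,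
      ih fun i hi => hbg i (by omega), hbg m (by omega), pow_succ (-1 : ℝ), heven, hs, hc]
    push_cast
    rw [show a * (2 * (m + 1) - 1) = a * (2 * m) + a by ring,
      show a * (2 * m + 1) = a * (2 * m) + a by ring,
      show a * (2 * m - 1) = a * (2 * m) - a by ring, sin_add, sin_sub]
    ring

theorem stmt_14_general (N : ℕ) (hodd : Odd N) (h : ℝ)
    (hh : h = 1 / ((N : ℝ) + 1))
    (U : ℕ → ℝ) (hU0 : U 0 = 0) (hUN : U (N + 1) = 0)
    (hbigrid : ∀ j : ℕ, j ≤ (N - 1) / 2 →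
      U (2 * j + 1) = (U (2 * j) + U (2 * j + 2)) / 2) :
    ∀ k : ℕ, 1 ≤ k → k ≤ N →
      Real.cos (((N : ℝ) + 1 - (k : ℝ)) * Real.pi * h / 2) ^ 2 *
          (∑ j ∈ Finset.Icc 1 N, U j * Real.sin ((k : ℝ) * Real.pi * (j : ℝ) * h))
        + Real.cos ((k : ℝ) * Real.pi * h / 2) ^ 2 *
          (∑ j ∈ Finset.Icc 1 N,
            U j * Real.sin (((N : ℝ) + 1 - (k : ℝ)) * Real.pi * (j : ℝ) * h))
        = 0 := by
  intro k _ _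
  set a : ℝ := k * π * h with ha
  have hflip (x : ℝ) : ((N : ℝ) + 1 - k) * π * x * h = x * π - a * x := by
    rw [ha, hh]; field_simp
  have hcos : cos (((N : ℝ) + 1 - k) * π * h / 2) = sin (a / 2) := by
    rw [← cos_pi_div_two_sub]; congr 1; linarith [hflip 1]
  have hsin (j : ℕ) : sin (((N : ℝ) + 1 - k) * π * j * h) = -((-1) ^ j * sin (a * j)) := by
    rw [hflip, sin_nat_mul_pi_sub]
  obtain ⟨M, rfl⟩ := hodd
  have hweighted := sum_range_two_mul_weighted_sin_of_bigrid a hU0 (m := M + 1)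
    fun i hi => hbigrid i (by omega)
  rw [show 2 * (M + 1) = 2 * M + 1 + 1 by ring, hUN, zero_mul, zero_div,
    ← sum_Icc_one_eq_sum_range (by simp)] at hweighted
  rw [hcos, ← hweighted, mul_sum, mul_sum, ← sum_add_distrib]
  refine sum_congr rfl fun j _ => ?_
  rw [hsin, show (k : ℝ) * π * j * h = a * j by ring]
  ring

theorem stmt_14 (N : ℕ) (hodd : Odd N) (hN : 1 ≤ N) (h : ℝ)
    (hh : h = 1 / ((N : ℝ) + 1))
    (U : ℕ → ℝ) (hU0 : U 0 = 0) (hUN : U (N + 1) = 0)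
    (hbigrid : ∀ j : ℕ, j ≤ (N - 1) / 2 →
      U (2 * j + 1) = (U (2 * j) + U (2 * j + 2)) / 2) :
    ∀ k : ℕ, 1 ≤ k → k ≤ N →
      Real.cos (((N : ℝ) + 1 - (k : ℝ)) * Real.pi * h / 2) ^ 2 *
          (∑ j ∈ Finset.Icc 1 N, U j * Real.sin ((k : ℝ) * Real.pi * (j : ℝ) * h))
        + Real.cos ((k : ℝ) * Real.pi * h / 2) ^ 2 *
          (∑ j ∈ Finset.Icc 1 N,
            U j * Real.sin (((N : ℝ) + 1 - (k : ℝ)) * Real.pi * (j : ℝ) * h))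
        = 0 :=
  stmt_14_general N hodd h hh U hU0 hUN hbigrid
end
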